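/- arXiv:1908.08619 — 7 statements merged into one kernel-verified Lean document; each statement's English description precedes it below -/
import Mathlib

section
/- Let N ≥ 2 and let ν be any utility function on subsets of I = {1,…,N}. For any two distinct players i, j ∈ I, the difference of their Shapley values satisfies s(ν,i) − s(ν,j) = (1/(N−1)) · ∑_{S ⊆ I∖{i,j}} (1/binom(N−2,|S|)) · (ν(S∪{i}) − ν(S∪{j})). -/
open Finset

/-- The Shapley value of player `i` in the cooperative game with player set `P`
and utility function `ν`. -/
noncomputable def shapley (P : Finset ℕ) (ν : Finset ℕ → ℝ) (i : ℕ) : ℝ :=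
  (1 / (P.card : ℝ)) * ∑ S ∈ (P.erase i).powerset,
    (1 / ((P.card - 1).choose S.card : ℝ)) * (ν (insert i S) - ν S)

/-- Arithmetic key identity: `(1/N)(1/C(N-1,t) + 1/C(N-1,t+1)) = (1/(N-1))(1/C(N-2,t))`. -/
lemma shapley_key (N t : ℕ) (hN : 2 ≤ N) (ht : t ≤ N - 2) :
    1 / (N : ℝ) * (1 / ((N - 1).choose t : ℝ) + 1 / ((N - 1).choose (t + 1) : ℝ)) =
      1 / ((N : ℝ) - 1) * (1 / ((N - 2).choose t : ℝ)) := by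
  have ht1 : t + 1 ≤ N - 1 := by omega
  have ha : ((N - 1).choose t : ℝ) ≠ 0 := by
    exact_mod_cast (Nat.choose_pos (by omega : t ≤ N - 1)).ne'
  have hb : ((N - 1).choose (t + 1) : ℝ) ≠ 0 := by
    exact_mod_cast (Nat.choose_pos ht1).ne'
  have hc : ((N - 2).choose t : ℝ) ≠ 0 := by
    exact_mod_cast (Nat.choose_pos ht).ne'
  have hN0 : (N : ℝ) ≠ 0 := by positivity
  have hN1 : (N : ℝ) - 1 ≠ 0 := by
    have : (2 : ℝ) ≤ N := by exact_mod_cast hN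
    linarith
  -- nat identities
  have h1 : (N - 1).choose (t + 1) * (t + 1) = (N - 1) * (N - 2).choose t := by
    have := Nat.add_one_mul_choose_eq (N - 2) t
    have hs : N - 2 + 1 = N - 1 := by omega
    simpa [Nat.succ_eq_add_one, hs] using this.symm
  have h2 : (N - 1).choose t * (N - 1 - t) = (N - 1) * (N - 2).choose t := by
    have := Nat.choose_succ_right_eq (N - 1) t
    omega
  -- cast to ℝ
  have hcast1 : ((N - 1 : ℕ) : ℝ) = (N : ℝ) - 1 := by
    push_cast [Nat.cast_sub (by omega : 1 ≤ N)]; ring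
  have hcast2 : ((N - 1 - t : ℕ) : ℝ) = (N : ℝ) - 1 - t := by
    push_cast [Nat.cast_sub (by omega : t ≤ N - 1), Nat.cast_sub (by omega : 1 ≤ N)]; ring
  have h1' : ((N - 1).choose (t + 1) : ℝ) * (t + 1) = ((N : ℝ) - 1) * ((N - 2).choose t : ℝ) := by
    have := congrArg (Nat.cast : ℕ → ℝ) h1
    push_cast [hcast1] at this
    linarith
  have h2' : ((N - 1).choose t : ℝ) * ((N : ℝ) - 1 - t) = ((N : ℝ) - 1) * ((N - 2).choose t : ℝ) := by
    have := congrArg (Nat.cast : ℕ → ℝ) h2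
    push_cast [hcast2, hcast1] at this
    linarith
  field_simp
  linear_combination (-((N - 1).choose (t + 1) : ℝ)) * h2' - ((N - 1).choose t : ℝ) * h1'

/-- The difference of Shapley values of two distinct players `i, j` equals
`(1/(N−1)) ∑_{S ⊆ I∖{i,j}} (1/binom(N−2,|S|)) (ν(S∪{i}) − ν(S∪{j}))`. -/
theorem shapley_difference (N : ℕ) (hN : 2 ≤ N) (ν : Finset ℕ → ℝ)
    (i j : ℕ) (hi : i ∈ Finset.Icc 1 N) (hj : j ∈ Finset.Icc 1 N) (hij : i ≠ j) :
    shapley (Finset.Icc 1 N) ν i - shapley (Finset.Icc 1 N) ν j =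
      (1 / ((N : ℝ) - 1)) *
        ∑ S ∈ (((Finset.Icc 1 N).erase i).erase j).powerset,
          (1 / ((N - 2).choose S.card : ℝ)) * (ν (insert i S) - ν (insert j S)) := by
  set P := Finset.Icc 1 N with hP
  have hcard : P.card = N := by rw [hP, Nat.card_Icc]; omega
  set Q := (P.erase i).erase j with hQdef
  have hji : j ∈ P.erase i := Finset.mem_erase.mpr ⟨hij.symm, hj⟩
  have hij' : i ∈ P.erase j := Finset.mem_erase.mpr ⟨hij, hi⟩
  have hjQ : j ∉ Q := Finset.notMem_erase _ _
  have hiQ : i ∉ Q := fun h => Finset.notMem_erase i P (Finset.mem_of_mem_erase h)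
  have hins_j : insert j Q = P.erase i := Finset.insert_erase hji
  have hins_i : insert i Q = P.erase j := by
    rw [hQdef, Finset.erase_right_comm]; exact Finset.insert_erase hij'
  have hQcard : Q.card = N - 2 := by
    rw [hQdef, Finset.card_erase_of_mem hji, Finset.card_erase_of_mem hi]
    omega
  rw [shapley, shapley, hcard]
  rw [← hins_j, ← hins_i, Finset.sum_powerset_insert hjQ, Finset.sum_powerset_insert hiQ]
  rw [mul_add, mul_add, Finset.mul_sum, Finset.mul_sum, Finset.mul_sum, Finset.mul_sum,
    Finset.mul_sum, ← Finset.sum_add_distrib, ← Finset.sum_add_distrib, ← Finset.sum_sub_distrib]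
  refine Finset.sum_congr rfl ?_
  intro T hT
  have hTQ : T ⊆ Q := Finset.mem_powerset.mp hT
  have hjT : j ∉ T := fun h => hjQ (hTQ h)
  have hiT : i ∉ T := fun h => hiQ (hTQ h)
  have hTcard : T.card ≤ N - 2 := hQcard ▸ Finset.card_le_card hTQ
  have hcj : (insert j T).card = T.card + 1 := Finset.card_insert_of_notMem hjT
  have hci : (insert i T).card = T.card + 1 := Finset.card_insert_of_notMem hiT
  have hcomm : insert j (insert i T) = insert i (insert j T) := Finset.insert_comm _ _ _
  rw [hcj, hci, hcomm]
  have key := shapley_key N T.card hN hTcard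
  linear_combination (ν (insert i T) - ν (insert j T)) * key
end

section
/- Under the unweighted K-NN classification utility ν with sorted training points, the Shapley values satisfy the recursion s_N = 1[y_N = y_test]/N, and for every 1 ≤ i ≤ N−1, s_i = s_{i+1} + ((1[y_i = y_test] − 1[y_{i+1} = y_test])/K) · (min(K,i)/i). -/
/-!
Shapley values are averages over a random coalition whose size is uniform on `{0, …, n}` and
which is uniform among the coalitions of that size (`sizeUniformAvg`). The trace of such a random
coalition on a subset is again of this kind, and the difference of the Shapley values of two
players `i`, `j` is such an average of `ν (T ∪ {i}) - ν (T ∪ {j})` over the other players. For the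
K-NN utility a point counts iff fewer than `K` points of the coalition are closer, so this
difference only depends on how many of the points `1, …, i - 1` lie in `T`, and its average is the
fraction `min K i / i` of sizes below `K`.
-/

open Finset

/-- The unweighted K-NN classification utility: training points are sorted by
increasing distance to the test point, so the k-th nearest neighbor within `S`
is the k-th smallest element of `S` (given by the sorted list of `S`). -/
noncomputable def knnUtil (K : ℕ) (y : ℕ → ℕ) (ytest : ℕ) (S : Finset ℕ) : ℝ :=
  (1 / (K : ℝ)) * ∑ k ∈ Finset.range (min K S.card),
    if y ((S.sort (· ≤ ·)).getD k 0) = ytest then (1 : ℝ) else 0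

section SizeUniformAvg

variable {α : Type*}

noncomputable def sizeUniformAvg (R : Finset α) (h : Finset α → ℝ) : ℝ :=
  ∑ T ∈ R.powerset, h T / ((#R + 1) * (#R).choose #T)

theorem sizeUniformAvg_sub (R : Finset α) (f g : Finset α → ℝ) :
    sizeUniformAvg R f - sizeUniformAvg R g = sizeUniformAvg R (fun T => f T - g T) := by
  simp only [sizeUniformAvg, ← sum_sub_distrib, sub_div]

theorem sizeUniformAvg_congr {R : Finset α} {f g : Finset α → ℝ} (h : ∀ T ⊆ R, f T = g T) :
    sizeUniformAvg R f = sizeUniformAvg R g :=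
  sum_congr rfl fun T hT => by rw [h T (mem_powerset.mp hT)]

theorem sizeUniformAvg_card (A : Finset α) (φ : ℕ → ℝ) :
    sizeUniformAvg A (fun S => φ #S) = (∑ k ∈ range (#A + 1), φ k) / (#A + 1 : ℕ) := by
  rw [sizeUniformAvg, sum_powerset, sum_div]
  refine sum_congr rfl fun k hk => ?_
  have hpos : (0 : ℝ) < (#A).choose k := by
    exact_mod_cast Nat.choose_pos (Nat.lt_succ_iff.mp (mem_range.mp hk))
  rw [sum_congr rfl fun S hS => by rw [(mem_powersetCard.mp hS).2], sum_const,
    card_powersetCard, nsmul_eq_mul]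
  push_cast
  field_simp

variable [DecidableEq α]

-- Given its trace `T` on `R`, the random coalition contains `b` with probability
-- `(#T + 1) / (#R + 2)`.
theorem sizeUniformAvg_insert {b : α} {R : Finset α} (hb : b ∉ R) (h : Finset α → ℝ) :
    sizeUniformAvg (insert b R) h = sizeUniformAvg R (fun T =>
      ((#R + 1 - #T) * h T + (#T + 1) * h (insert b T)) / (#R + 2)) := by
  rw [sizeUniformAvg, sum_powerset_insert hb, ← sum_add_distrib, sizeUniformAvg,
    card_insert_of_notMem hb]
  refine sum_congr rfl fun T hT => ?_
  have hTR : #T ≤ #R := card_le_card (mem_powerset.mp hT)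
  have hbT : b ∉ T := fun h => hb (mem_powerset.mp hT h)
  have hpos : (0 : ℝ) < (#R).choose #T := by exact_mod_cast Nat.choose_pos hTR
  have hpos₁ : (0 : ℝ) < (#R + 1).choose #T := by exact_mod_cast Nat.choose_pos (by omega)
  have hpos₂ : (0 : ℝ) < (#R + 1).choose (#T + 1) := by exact_mod_cast Nat.choose_pos (by omega)
  have h₁ : ((#R).choose #T : ℝ) * (#R + 1) = (#R + 1).choose #T * (#R + 1 - #T) := by
    have := congrArg (Nat.cast : ℕ → ℝ) (Nat.choose_mul_succ_eq (#R) (#T))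
    push_cast [Nat.cast_sub (by omega : #T ≤ #R + 1)] at this
    linarith
  have h₂ : ((#R : ℝ) + 1) * (#R).choose #T = (#R + 1).choose (#T + 1) * (#T + 1) := by
    exact_mod_cast Nat.add_one_mul_choose_eq (#R) (#T)
  rw [card_insert_of_notMem hbT, div_add_div _ _ (by positivity) (by positivity),
    div_div, div_eq_div_iff (by positivity) (by positivity)]
  push_cast
  linear_combination (h T * (#R + 2) ^ 2 * (#R + 1).choose (#T + 1)) * h₁
    + (h (insert b T) * (#R + 2) ^ 2 * (#R + 1).choose #T) * h₂

theorem sizeUniformAvg_inter_of_subset {A R : Finset α} (hAR : A ⊆ R) (g : Finset α → ℝ) :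
    sizeUniformAvg R (fun T => g (T ∩ A)) = sizeUniformAvg A g := by
  have hdisj : Disjoint A (R \ A) := disjoint_sdiff
  rw [← union_sdiff_of_subset hAR]
  generalize R \ A = B at hdisj ⊢
  induction B using Finset.induction_on with
  | empty =>
    rw [union_empty]
    exact sizeUniformAvg_congr fun T hT => by rw [inter_eq_left.mpr hT]
  | @insert b B hbB ih =>
    have hbA : b ∉ A := disjoint_right.mp hdisj (mem_insert_self b B)
    rw [union_insert, sizeUniformAvg_insert (by simp [hbA, hbB]),
      ← ih (hdisj.mono_right (subset_insert b B))]
    refine sizeUniformAvg_congr fun T _ => ?_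
    rw [insert_inter_of_notMem hbA]
    field_simp
    ring

end SizeUniformAvg

theorem shapley_eq_sizeUniformAvg {P : Finset ℕ} {i : ℕ} (hi : i ∈ P) (ν : Finset ℕ → ℝ) :
    shapley P ν i = sizeUniformAvg (P.erase i) (fun S => ν (insert i S) - ν S) := by
  rw [shapley, sizeUniformAvg, mul_sum, card_erase_of_mem hi,
    Nat.cast_pred (card_pos.mpr ⟨i, hi⟩)]
  refine sum_congr rfl fun S _ => ?_
  rw [sub_add_cancel]
  field_simp

theorem shapley_sub_shapley {P : Finset ℕ} {i j : ℕ} (hi : i ∈ P) (hj : j ∈ P) (hij : i ≠ j)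
    (ν : Finset ℕ → ℝ) :
    shapley P ν i - shapley P ν j =
      sizeUniformAvg ((P.erase i).erase j) (fun T => ν (insert i T) - ν (insert j T)) := by
  set R := (P.erase i).erase j
  have hjR : j ∉ R := notMem_erase j _
  have hiR : i ∉ R := fun h => notMem_erase i P (mem_of_mem_erase h)
  have hPi : P.erase i = insert j R := (insert_erase (mem_erase.mpr ⟨hij.symm, hj⟩)).symm
  have hPj : P.erase j = insert i R := by
    rw [show R = (P.erase j).erase i from erase_right_comm]
    exact (insert_erase (mem_erase.mpr ⟨hij, hi⟩)).symm
  rw [shapley_eq_sizeUniformAvg hi, shapley_eq_sizeUniformAvg hj, hPi, hPj,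
    sizeUniformAvg_insert hjR, sizeUniformAvg_insert hiR, sizeUniformAvg_sub]
  clear_value R
  refine sizeUniformAvg_congr fun T _ => ?_
  rw [insert_comm j i, ← sub_div, div_eq_iff (by positivity)]
  ring

section SortRank

variable {α M : Type*} [LinearOrder α] [AddCommMonoid M]

theorem card_filter_lt_orderEmbOfFin (S : Finset α) (k : Fin #S) :
    #{x ∈ S | x < S.orderEmbOfFin rfl k} = k := by
  set e := S.orderEmbOfFin rfl
  suffices {x ∈ S | x < e k} = (Iio k).map e.toEmbedding by
    rw [this, card_map, Fin.card_Iio]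
  ext x
  simp only [mem_filter, mem_map, mem_Iio]
  constructor
  · rintro ⟨hxS, hxk⟩
    obtain ⟨j, rfl⟩ : x ∈ Set.range e := by rwa [range_orderEmbOfFin]
    exact ⟨j, e.lt_iff_lt.mp hxk, rfl⟩
  · rintro ⟨j, hjk, rfl⟩
    exact ⟨orderEmbOfFin_mem S rfl j, e.lt_iff_lt.mpr hjk⟩

theorem sum_range_min_sort_getD (S : Finset α) (K : ℕ) (d : α) (f : α → M) :
    ∑ k ∈ range (min K #S), f ((S.sort (· ≤ ·)).getD k d) =
      ∑ x ∈ S, if #{z ∈ S | z < x} < K then f x else 0 := by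
  set e := S.orderEmbOfFin rfl
  have hrange : range (min K #S) = {k ∈ range #S | k < K} := by
    ext k; simp only [mem_range, mem_filter]; omega
  calc ∑ k ∈ range (min K #S), f ((S.sort (· ≤ ·)).getD k d)
      = ∑ k : Fin #S, if (k : ℕ) < K then f (e k) else 0 := by
        rw [hrange, sum_filter, ← Fin.sum_univ_eq_sum_range]
        refine sum_congr rfl fun k _ => ?_
        rw [List.getD_eq_getElem _ _ (by simp), orderEmbOfFin_apply]
        rfl
    _ = ∑ x ∈ univ.map e.toEmbedding, if #{z ∈ S | z < x} < K then f x else 0 := by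
        rw [sum_map]
        exact sum_congr rfl fun k _ => by rw [RelEmbedding.coe_toEmbedding, card_filter_lt_orderEmbOfFin]
    _ = ∑ x ∈ S, if #{z ∈ S | z < x} < K then f x else 0 := by
        rw [map_orderEmbOfFin_univ]

end SortRank

theorem sum_range_ite_lt (n K : ℕ) (a : ℝ) :
    ∑ k ∈ range n, (if k < K then a else 0) = min (K : ℝ) n * a := by
  have hfilter : {k ∈ range n | k < K} = range (min K n) := by
    ext k; simp only [mem_filter, mem_range]; omega
  rw [← sum_filter, hfilter, sum_const, card_range, nsmul_eq_mul, Nat.cast_min]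

section KNN

variable (K : ℕ) (y : ℕ → ℕ) (ytest : ℕ)

theorem knnUtil_eq_sum_rank (S : Finset ℕ) :
    knnUtil K y ytest S = 1 / K *
      ∑ j ∈ S, if #{x ∈ S | x < j} < K then (if y j = ytest then (1 : ℝ) else 0) else 0 := by
  rw [knnUtil, sum_range_min_sort_getD S K 0 fun j => if y j = ytest then (1 : ℝ) else 0]

theorem knnUtil_insert_sub_of_forall_lt {S : Finset ℕ} {n : ℕ} (hS : ∀ x ∈ S, x < n) :
    knnUtil K y ytest (insert n S) - knnUtil K y ytest S =
      if #S < K then (if y n = ytest then (1 : ℝ) else 0) / K else 0 := by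
  have hn : n ∉ S := fun h => lt_irrefl n (hS n h)
  have hrank_n : #{x ∈ insert n S | x < n} = #S := by
    rw [filter_insert, if_neg (lt_irrefl n), filter_true_of_mem hS]
  have hrank : ∀ j ∈ S, #{x ∈ insert n S | x < j} = #{x ∈ S | x < j} := fun j hj => by
    rw [filter_insert, if_neg (hS j hj).not_gt]
  rw [knnUtil_eq_sum_rank, knnUtil_eq_sum_rank, sum_insert hn, hrank_n,
    sum_congr rfl fun j hj => by rw [hrank j hj]]
  split_ifs <;> ring

theorem knnUtil_insert_sub_insert_succ {T : Finset ℕ} {i : ℕ} (hi : i ∉ T) (hi' : i + 1 ∉ T) :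
    knnUtil K y ytest (insert i T) - knnUtil K y ytest (insert (i + 1) T) =
      if #{x ∈ T | x < i} < K then
        ((if y i = ytest then (1 : ℝ) else 0) - (if y (i + 1) = ytest then (1 : ℝ) else 0)) / K
      else 0 := by
  have hrank_i : #{x ∈ insert i T | x < i} = #{x ∈ T | x < i} := by
    rw [filter_insert, if_neg (lt_irrefl i)]
  have hrank_succ : #{x ∈ insert (i + 1) T | x < i + 1} = #{x ∈ T | x < i} := by
    rw [filter_insert, if_neg (lt_irrefl _)]
    congr 1
    exact filter_congr fun x hx => by have : x ≠ i := ne_of_mem_of_not_mem hx hi; omega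
  have hrank : ∀ j ∈ T,
      #{x ∈ insert i T | x < j} = #{x ∈ insert (i + 1) T | x < j} := fun j hj => by
    have hji : j ≠ i := ne_of_mem_of_not_mem hj hi
    have hji' : j ≠ i + 1 := ne_of_mem_of_not_mem hj hi'
    rw [filter_insert, filter_insert]
    by_cases h : i < j
    · rw [if_pos h, if_pos (by omega), card_insert_of_notMem (fun hc => hi (mem_filter.mp hc).1),
        card_insert_of_notMem (fun hc => hi' (mem_filter.mp hc).1)]
    · rw [if_neg h, if_neg (by omega)]
  rw [knnUtil_eq_sum_rank, knnUtil_eq_sum_rank, sum_insert hi, sum_insert hi', hrank_i,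
    hrank_succ, sum_congr rfl fun j hj => by rw [hrank j hj]]
  split_ifs <;> ring

end KNN

theorem shapley_knnUtil_last (N K : ℕ) (hK1 : 1 ≤ K) (hKN : K ≤ N) (y : ℕ → ℕ) (ytest : ℕ) :
    shapley (Icc 1 N) (knnUtil K y ytest) N = (if y N = ytest then (1 : ℝ) else 0) / N := by
  have hN : N ∈ Icc 1 N := mem_Icc.mpr ⟨hK1.trans hKN, le_rfl⟩
  have hcard : #((Icc 1 N).erase N) + 1 = N := by
    rw [card_erase_of_mem hN, Nat.card_Icc]; omega
  have hlt : ∀ S ⊆ (Icc 1 N).erase N, ∀ x ∈ S, x < N := fun S hS x hx =>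
    lt_of_le_of_ne (mem_Icc.mp (mem_of_mem_erase (hS hx))).2 (ne_of_mem_erase (hS hx))
  rw [shapley_eq_sizeUniformAvg hN,
    sizeUniformAvg_congr fun S hS => knnUtil_insert_sub_of_forall_lt K y ytest (hlt S hS),
    sizeUniformAvg_card _ fun t => if t < K then (if y N = ytest then (1 : ℝ) else 0) / K else 0,
    hcard, sum_range_ite_lt, min_eq_left (Nat.cast_le.mpr hKN)]
  field_simp

theorem shapley_knnUtil_sub_succ (N K : ℕ) (y : ℕ → ℕ) (ytest : ℕ) {i : ℕ} (hi : 1 ≤ i)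
    (hiN : i < N) :
    shapley (Icc 1 N) (knnUtil K y ytest) i - shapley (Icc 1 N) (knnUtil K y ytest) (i + 1) =
      min (K : ℝ) i *
        (((if y i = ytest then (1 : ℝ) else 0) - (if y (i + 1) = ytest then (1 : ℝ) else 0)) / K) /
          i := by
  have hmem : i ∈ Icc 1 N := mem_Icc.mpr ⟨hi, hiN.le⟩
  have hmem' : i + 1 ∈ Icc 1 N := mem_Icc.mpr ⟨by omega, hiN⟩
  set R := ((Icc 1 N).erase i).erase (i + 1)
  have hiR : i ∉ R := fun h => notMem_erase i _ (mem_of_mem_erase h)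
  have hiR' : i + 1 ∉ R := notMem_erase (i + 1) _
  have hAR : Ico 1 i ⊆ R := fun x hx => by
    simp only [R, mem_erase, mem_Icc, mem_Ico] at hx ⊢; omega
  have hcard : #(Ico 1 i) + 1 = i := by rw [Nat.card_Ico]; omega
  have hrank : ∀ T ⊆ R, {x ∈ T | x < i} = T ∩ Ico 1 i := fun T hT => by
    ext x
    simp only [mem_filter, mem_inter, mem_Ico, and_congr_right_iff]
    intro hx
    have := (mem_Icc.mp (mem_of_mem_erase (mem_of_mem_erase (hT hx)))).1
    omega
  rw [shapley_sub_shapley hmem hmem' (by omega), sizeUniformAvg_congr fun T hT => by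
      rw [knnUtil_insert_sub_insert_succ K y ytest (fun h => hiR (hT h)) (fun h => hiR' (hT h)),
        hrank T hT],
    sizeUniformAvg_inter_of_subset hAR fun S => if #S < K then _ else 0,
    sizeUniformAvg_card _ fun t => if t < K then _ else 0, hcard, sum_range_ite_lt]

/-- Recursion for the Shapley values of the unweighted K-NN classifier:
`s_N = 1[y_N = y_test]/N` and
`s_i = s_{i+1} + ((1[y_i=y_test] − 1[y_{i+1}=y_test])/K)·(min(K,i)/i)`. -/
theorem knn_shapley_recursion (N K : ℕ) (hK1 : 1 ≤ K) (hKN : K ≤ N)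
    (y : ℕ → ℕ) (ytest : ℕ) :
    shapley (Finset.Icc 1 N) (knnUtil K y ytest) N =
      (if y N = ytest then (1 : ℝ) else 0) / N ∧
    ∀ i, 1 ≤ i → i ≤ N - 1 →
      shapley (Finset.Icc 1 N) (knnUtil K y ytest) i =
        shapley (Finset.Icc 1 N) (knnUtil K y ytest) (i + 1) +
          ((if y i = ytest then (1 : ℝ) else 0) -
              (if y (i + 1) = ytest then (1 : ℝ) else 0)) / K *
            (min (K : ℝ) (i : ℝ) / i) := by
  refine ⟨shapley_knnUtil_last N K hK1 hKN y ytest, fun i hi hiN => ?_⟩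
  rw [← sub_eq_iff_eq_add', shapley_knnUtil_sub_succ N K y ytest hi (by omega)]
  ring
end

section
/- Under the unweighted K-NN classification utility with sorted training points, the Shapley values satisfy |s_i| ≤ min(1/i, 1/K) for every 1 ≤ i ≤ N. -/
open Finset

/-! Adding `i` to a coalition `S` changes the utility by at most `1/K`, and not at
all once `K` points of `S` are closer than `i`: then `i` is not among the `K` nearest neighbours.
So `|s_i|` is at most `1/K` times the Shapley-weighted mass of the coalitions containing fewer than
`K` of the `i - 1` points closer than `i`. Under the Shapley weights the number of those points in
`S` is uniformly distributed on `{0, …, i - 1}`, as is the number of them preceding `i` in a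
uniformly random order; this is the identity
`∑ₜ C(b,t) / C(a+b, j+t) = (a+b+1) / ((a+1) C(a,j))`. Hence the mass is `min(i, K) / i`,
and `|s_i| ≤ min(i, K) / (i K) = min(1/i, 1/K)`. -/

theorem one_div_choose_add_one_div_choose_succ {m k : ℕ} (hk : k ≤ m) :
    (1 : ℝ) / (m + 1).choose k + 1 / (m + 1).choose (k + 1) =
      (m + 2) / ((m + 1) * m.choose k) := by
  have hX : ((m + 1) * m.choose k : ℝ) ≠ 0 := by
    have := Nat.choose_pos hk
    positivity
  have hlow : ((m + 1) * m.choose k : ℝ) = (m + 1).choose k * (m + 1 - k) := by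
    have h := Nat.choose_mul_succ_eq m k
    rw [mul_comm, Nat.sub_add_comm hk] at h
    rw [show (m + 1 - k : ℝ) = ((m - k : ℕ) : ℝ) + 1 by push_cast [Nat.cast_sub hk]; ring]
    exact_mod_cast h
  have hup : ((m + 1) * m.choose k : ℝ) = (m + 1).choose (k + 1) * (k + 1) := by
    exact_mod_cast Nat.add_one_mul_choose_eq m k
  have e1 : (1 : ℝ) / (m + 1).choose k = (m + 1 - k) / ((m + 1) * m.choose k) := by
    rw [hlow] at hX ⊢
    obtain ⟨hc, hd⟩ := mul_ne_zero_iff.mp hX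
    field_simp
  have e2 : (1 : ℝ) / (m + 1).choose (k + 1) = (k + 1) / ((m + 1) * m.choose k) := by
    rw [hup] at hX ⊢
    obtain ⟨hc, hd⟩ := mul_ne_zero_iff.mp hX
    field_simp
  rw [e1, e2, ← add_div]
  ring

theorem sum_range_choose_div_choose_add {a j : ℕ} (hj : j ≤ a) (b : ℕ) :
    ∑ t ∈ range (b + 1), (b.choose t : ℝ) / (a + b).choose (j + t) =
      (a + b + 1) / ((a + 1) * a.choose j) := by
  have hpos : (0 : ℝ) < a.choose j := by exact_mod_cast Nat.choose_pos hj
  induction b with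
  | zero =>
    simp
    field_simp
  | succ b ih =>
    have hrec : ∀ t ∈ range (b + 1),
        (1 : ℝ) / (a + b + 1).choose (j + t) + 1 / (a + b + 1).choose (j + (t + 1)) =
          (a + b + 2) / (a + b + 1) * (1 / (a + b).choose (j + t)) := by
      intro t ht
      rw [← add_assoc j, one_div_choose_add_one_div_choose_succ (by simp at ht; omega)]
      push_cast
      field_simp
    simp_rw [div_eq_mul_one_div (b.choose _ : ℝ), div_eq_mul_one_div ((b + 1).choose _ : ℝ)]
      at ih ⊢
    rw [sum_choose_succ_mul (fun t _ => (1 : ℝ) / (a + (b + 1)).choose (j + t)),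
      ← sum_add_distrib]
    simp_rw [← mul_add]
    rw [sum_congr rfl fun t ht => by rw [← add_assoc, hrec t ht, mul_left_comm], ← mul_sum, ih]
    push_cast
    field_simp
    ring

theorem sum_powerset_eq_sum_powerset_filter_union {α M : Type*} [DecidableEq α]
    [AddCommMonoid M] (E : Finset α) (p : α → Prop) [DecidablePred p] (F : Finset α → M) :
    ∑ S ∈ E.powerset, F S =
      ∑ A ∈ {x ∈ E | p x}.powerset, ∑ B ∈ {x ∈ E | ¬p x}.powerset, F (A ∪ B) := by
  rw [← sum_product']
  refine sum_nbij' (fun S => ({x ∈ S | p x}, {x ∈ S | ¬p x})) (fun AB => AB.1 ∪ AB.2)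
    ?_ ?_ ?_ ?_ fun S _ => by rw [filter_union_filter_not_eq]
  · intro S hS
    simp only [mem_product, mem_powerset] at hS ⊢
    exact ⟨filter_subset_filter p hS, filter_subset_filter _ hS⟩
  · intro AB hAB
    simp only [mem_product, mem_powerset] at hAB ⊢
    exact union_subset (hAB.1.trans (filter_subset _ _)) (hAB.2.trans (filter_subset _ _))
  · intro S _
    exact filter_union_filter_not_eq p S
  · rintro ⟨A, B⟩ hAB
    simp only [mem_product, mem_powerset, subset_iff, mem_filter] at hAB
    ext x <;> simp only [mem_filter, mem_union] <;> grind

theorem sum_powerset_one_div_choose_mul_card_filter {α : Type*} [DecidableEq α]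
    (E : Finset α) (p : α → Prop) [DecidablePred p] (f : ℕ → ℝ) :
    ∑ S ∈ E.powerset, 1 / ((#E).choose #S : ℝ) * f #{x ∈ S | p x} =
      (#E + 1) / (#{x ∈ E | p x} + 1) * ∑ j ∈ range (#{x ∈ E | p x} + 1), f j := by
  set a := #{x ∈ E | p x} with ha
  set b := #{x ∈ E | ¬p x}
  have hE : #E = a + b := (card_filter_add_card_filter_not p).symm
  have hterm : ∀ A ∈ {x ∈ E | p x}.powerset, ∑ B ∈ {x ∈ E | ¬p x}.powerset,
      1 / ((#E).choose #(A ∪ B) : ℝ) * f #{x ∈ A ∪ B | p x} =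
        (a + b + 1) / (a + 1) * ((a.choose #A : ℝ)⁻¹ * f #A) := by
    intro A hA
    rw [mem_powerset] at hA
    have hsplit : ∀ B ∈ {x ∈ E | ¬p x}.powerset, 1 / ((#E).choose #(A ∪ B) : ℝ) *
        f #{x ∈ A ∪ B | p x} = f #A * (1 / (a + b).choose (#A + #B)) := by
      intro B hB
      rw [mem_powerset] at hB
      have hA' : ∀ x ∈ A, p x := fun x hx => (mem_filter.mp (hA hx)).2
      have hB' : ∀ x ∈ B, ¬p x := fun x hx => (mem_filter.mp (hB hx)).2
      rw [card_union_of_disjoint (disjoint_left.mpr fun x hxA hxB => hB' x hxB (hA' x hxA)),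
        filter_union, filter_true_of_mem hA', filter_false_of_mem hB', union_empty, hE, mul_comm]
    rw [sum_congr rfl hsplit, ← mul_sum,
      sum_powerset_apply_card (fun t => (1 : ℝ) / (a + b).choose (#A + t))]
    simp_rw [nsmul_eq_mul, mul_one_div]
    rw [sum_range_choose_div_choose_add (card_le_card hA) b, ← ha]
    have : (0 : ℝ) < a.choose #A := by exact_mod_cast Nat.choose_pos (card_le_card hA)
    field_simp
  rw [sum_powerset_eq_sum_powerset_filter_union E p, sum_congr rfl hterm, ← mul_sum,
    sum_powerset_apply_card (fun j => (a.choose j : ℝ)⁻¹ * f j), hE]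
  congr 1
  · push_cast
    ring
  · refine sum_congr rfl fun j hj => ?_
    have : (0 : ℝ) < a.choose j := by
      exact_mod_cast Nat.choose_pos (Nat.lt_succ_iff.mp (mem_range.mp hj))
    rw [nsmul_eq_mul, ← ha]
    field_simp

theorem abs_shapley_le {P : Finset ℕ} {ν : Finset ℕ → ℝ} {i : ℕ} {b : Finset ℕ → ℝ}
    (hb : ∀ S ⊆ P.erase i, |ν (insert i S) - ν S| ≤ b S) :
    |shapley P ν i| ≤
      1 / #P * ∑ S ∈ (P.erase i).powerset, 1 / ((#P - 1).choose #S : ℝ) * b S := by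
  rw [shapley, abs_mul, abs_of_nonneg (by positivity)]
  gcongr
  refine (abs_sum_le_sum_abs _ _).trans (sum_le_sum fun S hS => ?_)
  rw [abs_mul, abs_of_nonneg (by positivity)]
  gcongr
  exact hb S (mem_powerset.mp hS)

section Nearest

variable {α : Type*} [LinearOrder α]

def rank (S : Finset α) (x : α) : ℕ := #{y ∈ S | y < x}

-- The set `{σ_S(1), …, σ_S(K)}` of the `K` nearest neighbours within `S`.
def nearest (K : ℕ) (S : Finset α) : Finset α := {x ∈ S | rank S x < K}

theorem rank_le_rank_of_subset {S T : Finset α} (h : S ⊆ T) (x : α) : rank S x ≤ rank T x :=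
  card_le_card (filter_subset_filter _ h)

theorem rank_monotone (S : Finset α) : Monotone (rank S) :=
  fun _ _ hxx' => card_le_card (monotone_filter_right S fun _ _ hz => hz.trans_le hxx')

theorem rank_strictMonoOn (S : Finset α) : StrictMonoOn (rank S) S := by
  intro x hx x' _ hxx'
  refine card_lt_card ⟨monotone_filter_right S fun _ _ hz => hz.trans hxx', fun hsub => ?_⟩
  exact lt_irrefl x (mem_filter.mp (hsub (mem_filter.mpr ⟨hx, hxx'⟩))).2

theorem rank_insert_of_not_lt {i x : α} {S : Finset α} (h : ¬i < x) :
    rank (insert i S) x = rank S x := by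
  rw [rank, filter_insert, if_neg h, rank]

theorem rank_insert_of_notMem {i : α} {S : Finset α} (hi : i ∉ S) (x : α) :
    rank (insert i S) x = rank S x + if i < x then 1 else 0 := by
  unfold rank
  rw [filter_insert]
  split_ifs
  · exact card_insert_of_notMem fun h => hi (mem_filter.mp h).1
  · rfl

theorem nearest_insert_subset (K : ℕ) (i : α) (S : Finset α) :
    nearest K (insert i S) ⊆ insert i (nearest K S) := by
  intro x hx
  obtain ⟨hxT, hxK⟩ := mem_filter.mp hx
  rcases mem_insert.mp hxT with rfl | hxS
  · exact mem_insert_self _ _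
  · exact mem_insert_of_mem
      (mem_filter.mpr ⟨hxS, (rank_le_rank_of_subset (subset_insert i S) x).trans_lt hxK⟩)

theorem nearest_insert_of_le_rank {K : ℕ} {i : α} {S : Finset α} (h : K ≤ rank S i) :
    nearest K (insert i S) = nearest K S := by
  ext x
  simp only [nearest, mem_filter, mem_insert]
  by_cases hix : i < x
  · have hSx : K ≤ rank S x := h.trans (rank_monotone S hix.le)
    have hTx : K ≤ rank (insert i S) x :=
      hSx.trans (rank_le_rank_of_subset (subset_insert i S) x)
    constructor <;> rintro ⟨-, hlt⟩ <;> omega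
  · rw [rank_insert_of_not_lt hix]
    constructor
    · rintro ⟨rfl | hxS, hx⟩
      · omega
      · exact ⟨hxS, hx⟩
    · exact fun ⟨hxS, hx⟩ => ⟨Or.inr hxS, hx⟩

theorem card_nearest_sdiff_nearest_insert_le_one (K : ℕ) {i : α} {S : Finset α} (hi : i ∉ S) :
    #(nearest K S \ nearest K (insert i S)) ≤ 1 := by
  have hlast : ∀ z ∈ nearest K S \ nearest K (insert i S), z ∈ S ∧ rank S z + 1 = K := by
    intro z hz
    simp only [mem_sdiff, nearest, mem_filter, mem_insert, not_and, not_lt] at hz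
    obtain ⟨⟨hzS, hzK⟩, hzT⟩ := hz
    have := rank_insert_of_notMem hi z
    have := hzT (Or.inr hzS)
    exact ⟨hzS, by split_ifs at * <;> omega⟩
  refine card_le_one.mpr fun x hx x' hx' => ?_
  obtain ⟨hxS, hxK⟩ := hlast x hx
  obtain ⟨hx'S, hx'K⟩ := hlast x' hx'
  exact (rank_strictMonoOn S).injOn hxS hx'S (by omega)

theorem nearest_succ_insert_of_forall_lt {K : ℕ} {a : α} {S : Finset α}
    (ha : ∀ x ∈ S, a < x) :
    nearest (K + 1) (insert a S) = insert a (nearest K S) := by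
  have haS : a ∉ S := fun h => lt_irrefl a (ha a h)
  have hrank : rank (insert a S) a = 0 := by
    rw [rank_insert_of_not_lt (lt_irrefl a), rank, card_eq_zero, filter_eq_empty_iff]
    exact fun x hx => (ha x hx).not_gt
  rw [nearest, filter_insert, hrank, if_pos K.succ_pos]
  congr 1
  refine filter_congr fun x hx => ?_
  rw [rank_insert_of_notMem haS, if_pos (ha x hx)]
  omega

theorem sum_range_min_getD_eq_sum_nearest {M : Type*} [AddCommMonoid M] (g : α → M) (d : α) :
    ∀ l : List α, l.Pairwise (· < ·) → ∀ K : ℕ,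
      ∑ k ∈ range (min K l.length), g (l.getD k d) = ∑ x ∈ nearest K l.toFinset, g x := by
  intro l
  induction l with
  | nil =>
    intro _ K
    simp [nearest]
    rfl
  | cons a t ih =>
    intro hs K
    have ha : ∀ x ∈ t.toFinset, a < x := fun x hx =>
      List.rel_of_pairwise_cons hs (List.mem_toFinset.mp hx)
    cases K with
    | zero => simp [nearest]
    | succ K =>
      have haN : a ∉ nearest K t.toFinset := fun h => lt_irrefl a (ha a (filter_subset _ _ h))
      rw [List.toFinset_cons, nearest_succ_insert_of_forall_lt ha, sum_insert haN,
        List.length_cons, Nat.succ_min_succ, sum_range_succ']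
      simp only [List.getD_cons_succ, List.getD_cons_zero]
      rw [ih hs.of_cons K, add_comm]

theorem abs_sum_nearest_insert_sub_le {g : α → ℝ} (hg0 : ∀ x, 0 ≤ g x) (hg1 : ∀ x, g x ≤ 1)
    (K : ℕ) {i : α} {S : Finset α} (hi : i ∉ S) :
    |∑ x ∈ nearest K (insert i S), g x - ∑ x ∈ nearest K S, g x| ≤
      if rank S i < K then 1 else 0 := by
  split_ifs with h
  · have hsum : ∀ s : Finset α, #s ≤ 1 → 0 ≤ ∑ x ∈ s, g x ∧ ∑ x ∈ s, g x ≤ 1 := fun s hs =>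
      ⟨sum_nonneg fun x _ => hg0 x,
        (sum_le_card_nsmul s g 1 fun x _ => hg1 x).trans (by simpa using hs)⟩
    have hnew : #(nearest K (insert i S) \ nearest K S) ≤ 1 := by
      have hi' : ∀ z ∈ nearest K (insert i S) \ nearest K S, z = i := fun z hz =>
        (mem_insert.mp (nearest_insert_subset K i S (mem_sdiff.mp hz).1)).resolve_right
          (mem_sdiff.mp hz).2
      exact card_le_one.mpr fun x hx x' hx' => (hi' x hx).trans (hi' x' hx').symm
    obtain ⟨hnew0, hnew1⟩ := hsum _ hnew
    obtain ⟨hold0, hold1⟩ := hsum _ (card_nearest_sdiff_nearest_insert_le_one K hi)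
    rw [← sum_sdiff_sub_sum_sdiff]
    exact abs_sub_le_of_nonneg_of_le hnew0 hnew1 hold0 hold1
  · rw [nearest_insert_of_le_rank (not_lt.mp h), sub_self, abs_zero]

end Nearest

theorem knnUtil_eq_sum_nearest (K : ℕ) (y : ℕ → ℕ) (ytest : ℕ) (S : Finset ℕ) :
    knnUtil K y ytest S = 1 / K * ∑ x ∈ nearest K S, if y x = ytest then 1 else 0 := by
  rw [knnUtil, ← length_sort (· ≤ ·), sum_range_min_getD_eq_sum_nearest
    (fun x => if y x = ytest then (1 : ℝ) else 0) 0 _ (sortedLT_sort S).pairwise, sort_toFinset]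

theorem abs_knnUtil_insert_sub_le (K : ℕ) (y : ℕ → ℕ) (ytest : ℕ) {i : ℕ} {S : Finset ℕ}
    (hi : i ∉ S) :
    |knnUtil K y ytest (insert i S) - knnUtil K y ytest S| ≤
      1 / K * if rank S i < K then 1 else 0 := by
  rw [knnUtil_eq_sum_nearest, knnUtil_eq_sum_nearest, ← mul_sub, abs_mul,
    abs_of_nonneg (by positivity)]
  gcongr
  exact abs_sum_nearest_insert_sub_le (fun _ => by split_ifs <;> norm_num)
    (fun _ => by split_ifs <;> norm_num) K hi

theorem div_mul_le_min_one_div {c i K : ℕ} (hi : c ≤ i) (hK : c ≤ K) :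
    (c : ℝ) / (i * K) ≤ min (1 / (i : ℝ)) (1 / (K : ℝ)) := by
  have hcK : (c : ℝ) / K ≤ 1 := div_le_one_of_le₀ (by exact_mod_cast hK) (by positivity)
  have hci : (c : ℝ) / i ≤ 1 := div_le_one_of_le₀ (by exact_mod_cast hi) (by positivity)
  refine le_min ?_ ?_
  · calc (c : ℝ) / (i * K) = c / K * (1 / i) := by ring
      _ ≤ 1 / i := mul_le_of_le_one_left (by positivity) hcK
  · calc (c : ℝ) / (i * K) = c / i * (1 / K) := by ring
      _ ≤ 1 / K := mul_le_of_le_one_left (by positivity) hci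

theorem knn_shapley_bound_general (N K : ℕ) (y : ℕ → ℕ) (ytest : ℕ) :
    ∀ i, 1 ≤ i → i ≤ N →
      |shapley (Finset.Icc 1 N) (knnUtil K y ytest) i| ≤
        min (1 / (i : ℝ)) (1 / (K : ℝ)) := by
  intro i hi1 hiN
  have hN : 0 < N := hi1.trans hiN
  have hiP : i ∈ Icc 1 N := mem_Icc.mpr ⟨hi1, hiN⟩
  set E := (Icc 1 N).erase i
  have hE : #E = N - 1 := by rw [card_erase_of_mem hiP, Nat.card_Icc, Nat.add_sub_cancel]
  have hbelow : #{x ∈ E | x < i} = i - 1 := by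
    rw [show {x ∈ E | x < i} = Ico 1 i by ext x; simp [E]; omega, Nat.card_Ico]
  calc |shapley (Icc 1 N) (knnUtil K y ytest) i|
      ≤ 1 / #(Icc 1 N) * ∑ S ∈ E.powerset, 1 / ((#(Icc 1 N) - 1).choose #S : ℝ) *
          (1 / K * if #{x ∈ S | x < i} < K then 1 else 0) :=
        abs_shapley_le fun S hS => abs_knnUtil_insert_sub_le K y ytest fun h => by simpa using hS h
    _ = #{j ∈ range i | j < K} / (i * K) := by
        rw [← card_erase_of_mem hiP, sum_powerset_one_div_choose_mul_card_filter E (· < i)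
            fun j => 1 / K * if j < K then 1 else 0,
          hE, hbelow, Nat.sub_add_cancel hi1, Nat.cast_pred hN, Nat.cast_pred hi1, Nat.card_Icc,
          Nat.add_sub_cancel, ← mul_sum, sum_boole]
        simp only [sub_add_cancel]
        field_simp
    _ ≤ min (1 / (i : ℝ)) (1 / (K : ℝ)) :=
        div_mul_le_min_one_div ((card_filter_le _ _).trans_eq (card_range i))
          ((card_le_card fun j hj => mem_range.mpr (mem_filter.mp hj).2).trans_eq (card_range K))

/-- Bound on the Shapley values of the unweighted K-NN classifier:
`|s_i| ≤ min(1/i, 1/K)` for every `1 ≤ i ≤ N`. -/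
theorem knn_shapley_bound (N K : ℕ) (hK1 : 1 ≤ K) (hKN : K ≤ N)
    (y : ℕ → ℕ) (ytest : ℕ) :
    ∀ i, 1 ≤ i → i ≤ N →
      |shapley (Finset.Icc 1 N) (knnUtil K y ytest) i| ≤
        min (1 / (i : ℝ)) (1 / (K : ℝ)) :=
  knn_shapley_bound_general N K y ytest
end

section
/- For all natural numbers u, v and every integer i with 0 ≤ i ≤ u, ∑_{j=0}^{v} binom(u,i)·binom(v,j)/binom(u+v,i+j) = (u+v+1)/(u+1). -/
open Finset

lemma choose_inv_pascal (n k : ℕ) (hk : k ≤ n) :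
    (1 : ℝ) / ((n + 1).choose k : ℝ) + 1 / ((n + 1).choose (k + 1) : ℝ) =
      ((n : ℝ) + 2) / (((n : ℝ) + 1) * (n.choose k : ℝ)) := by
  have h1 : ((n + 1 : ℕ) : ℝ) * (n.choose k : ℝ) = ((n + 1).choose (k + 1) : ℝ) * ((k + 1 : ℕ) : ℝ) := by
    exact_mod_cast congrArg (Nat.cast : ℕ → ℝ) (Nat.add_one_mul_choose_eq n k)
  have h2 : (n.choose k : ℝ) * ((n + 1 : ℕ) : ℝ) = ((n + 1).choose k : ℝ) * (((n : ℝ) + 1) - (k : ℝ)) := by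
    have := congrArg (Nat.cast : ℕ → ℝ) (Nat.choose_mul_succ_eq n k)
    push_cast [Nat.cast_sub (by omega : k ≤ n + 1)] at this
    push_cast
    linarith [this]
  have p0 : (0 : ℝ) < (n.choose k : ℝ) := by exact_mod_cast (Nat.choose_pos hk)
  have p1 : (0 : ℝ) < ((n + 1).choose k : ℝ) := by exact_mod_cast (Nat.choose_pos (by omega))
  have p2 : (0 : ℝ) < ((n + 1).choose (k + 1) : ℝ) := by exact_mod_cast (Nat.choose_pos (by omega))
  push_cast at h1 h2 ⊢
  field_simp
  nlinarith [h1, h2, mul_pos p1 p2]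

/-- Binomial identity: for `i ≤ u`,
`∑_{j=0}^{v} binom(u,i)·binom(v,j)/binom(u+v,i+j) = (u+v+1)/(u+1)`. -/
theorem binom_ratio_sum (u v i : ℕ) (hi : i ≤ u) :
    ∑ j ∈ Finset.range (v + 1),
      ((u.choose i : ℝ) * (v.choose j : ℝ)) / ((u + v).choose (i + j) : ℝ) =
      ((u : ℝ) + v + 1) / ((u : ℝ) + 1) := by
  induction v with
  | zero =>
    have p0 : (0 : ℝ) < (u.choose i : ℝ) := by exact_mod_cast Nat.choose_pos hi
    simp [Nat.choose_self]
    field_simp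
  | succ v ih =>
    have key : ∀ j ∈ Finset.range (v + 1 + 1),
        ((u.choose i : ℝ) * ((v+1).choose j : ℝ)) / ((u + (v+1)).choose (i + j) : ℝ) =
        ((u.choose i : ℝ) * ((v+1).choose j : ℝ)) / (((u + v) + 1).choose (i + j) : ℝ) := by
      intro j _; rw [show u + (v+1) = (u+v) + 1 by omega]
    rw [Finset.sum_congr rfl key]
    -- split: total = A + B
    set g : ℕ → ℝ := fun j => ((u.choose i : ℝ) * (v.choose j : ℝ)) / (((u + v) + 1).choose (i + j) : ℝ) with hg
    set h : ℕ → ℝ := fun j => ((u.choose i : ℝ) * (v.choose j : ℝ)) / (((u + v) + 1).choose (i + j + 1) : ℝ) with hh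
    set f : ℕ → ℝ := fun j => ((u.choose i : ℝ) * ((v+1).choose j : ℝ)) / (((u + v) + 1).choose (i + j) : ℝ) with hf
    have hsplit :
        ∑ j ∈ Finset.range (v + 1 + 1), f j
        = (∑ j ∈ Finset.range (v + 1), g j) + ∑ j ∈ Finset.range (v + 1), h j := by
      have hstep : ∀ k ∈ Finset.range (v + 1), f (k + 1) = g (k + 1) + h k := by
        intro k _
        simp only [hf, hg, hh, Nat.choose_succ_succ v k]
        push_cast
        rw [show i + (k + 1) = i + k + 1 by omega]
        ring
      have hgtop : g (v + 1) = 0 := by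
        simp [hg, Nat.choose_eq_zero_of_lt (by omega : v < v + 1)]
      calc ∑ j ∈ Finset.range (v + 1 + 1), f j
          = (∑ k ∈ Finset.range (v + 1), f (k + 1)) + f 0 := Finset.sum_range_succ' f (v + 1)
        _ = (∑ k ∈ Finset.range (v + 1), (g (k + 1) + h k)) + g 0 := by
            rw [Finset.sum_congr rfl hstep]; simp [hf, hg]
        _ = ((∑ k ∈ Finset.range (v + 1), g (k + 1)) + g 0) + ∑ k ∈ Finset.range (v + 1), h k := by
            rw [Finset.sum_add_distrib]; ring
        _ = (∑ j ∈ Finset.range (v + 1 + 1), g j) + ∑ k ∈ Finset.range (v + 1), h k := by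
            rw [Finset.sum_range_succ' g (v + 1)]
        _ = ((∑ j ∈ Finset.range (v + 1), g j) + g (v + 1)) + ∑ k ∈ Finset.range (v + 1), h k := by
            rw [Finset.sum_range_succ]
        _ = (∑ j ∈ Finset.range (v + 1), g j) + ∑ k ∈ Finset.range (v + 1), h k := by
            rw [hgtop]; ring
    rw [hsplit]
    -- combine pairwise
    have hcomb : (∑ j ∈ Finset.range (v + 1), g j) + (∑ j ∈ Finset.range (v + 1), h j)
        = (((u:ℝ) + v + 2) / ((u:ℝ) + v + 1)) *
            ∑ j ∈ Finset.range (v + 1),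
              ((u.choose i : ℝ) * (v.choose j : ℝ)) / ((u + v).choose (i + j) : ℝ) := by
      rw [← Finset.sum_add_distrib, Finset.mul_sum]
      refine Finset.sum_congr rfl (fun j hj => ?_)
      have hj' : j ≤ v := by simp at hj; omega
      have hkn : i + j ≤ u + v := by omega
      have hch := choose_inv_pascal (u + v) (i + j) hkn
      have p0 : (0 : ℝ) < ((u+v).choose (i+j) : ℝ) := by exact_mod_cast Nat.choose_pos hkn
      have p1 : (0 : ℝ) < (((u+v)+1).choose (i+j) : ℝ) := by exact_mod_cast Nat.choose_pos (by omega)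
      have p2 : (0 : ℝ) < (((u+v)+1).choose (i+j+1) : ℝ) := by exact_mod_cast Nat.choose_pos (by omega)
      have expand : g j + h j
          = ((u.choose i : ℝ) * (v.choose j : ℝ)) *
            (1 / (((u + v) + 1).choose (i + j) : ℝ) + 1 / (((u + v) + 1).choose (i + j + 1) : ℝ)) := by
        simp only [hg, hh]; ring
      rw [expand, hch]
      push_cast
      have huv : (0:ℝ) < (u:ℝ) + v + 1 := by positivity
      field_simp
    rw [hcomb, ih]
    have huv : ((u:ℝ) + v + 1) ≠ 0 := by positivity
    have hu1 : ((u:ℝ) + 1) ≠ 0 := by positivity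
    push_cast
    field_simp
    ring
end

section
/- For all integers N ≥ 2, K ≥ 1 and every i with 1 ≤ i ≤ N−1, ∑_{k=0}^{N−2} (1/binom(N−2,k)) · ∑_{m=0}^{min(K−1,k)} binom(i−1,m)·binom(N−i−1,k−m) = min(K,i)·(N−1)/i. -/
open Finset

/-!
Writing `N = n + 2` and `i = a + 1`, exchange the two sums. For each fixed `m ≤ a`, the identity
`C(n,a) C(a,m) C(n-a,k-m) = C(n,k) C(k,m) C(n-k,a-m)` (both count the same multinomial choices)
turns the sum over `k` into `C(n,a)⁻¹ ∑ₖ C(k,m) C(n-k,a-m) = C(n+1,a+1) / C(n,a) = (n+1)/(a+1)`,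
independently of `m`; the terms with `m > a` vanish. So the double sum is
`min(K, a+1) · (n+1)/(a+1)`.
-/

theorem Nat.choose_mul_choose_sub_comm (n a b : ℕ) :
    n.choose a * (n - a).choose b = n.choose b * (n - b).choose a := by
  have ha := Nat.choose_mul (n := n) (Nat.le_add_right a b)
  have hb := Nat.choose_mul (n := n) (Nat.le_add_left b a)
  rw [Nat.add_sub_cancel_left] at ha
  rw [Nat.add_sub_cancel] at hb
  rw [← ha, ← hb, Nat.choose_symm_add]

theorem Nat.choose_mul_choose_mul_choose_sub_sub_comm {n a k m : ℕ}
    (ha : m ≤ a) (hk : m ≤ k) :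
    n.choose a * a.choose m * (n - a).choose (k - m) =
      n.choose k * k.choose m * (n - k).choose (a - m) := by
  have hsymm := Nat.choose_mul_choose_sub_comm (n - m) (a - m) (k - m)
  rw [Nat.sub_sub, Nat.add_sub_cancel' ha, Nat.sub_sub, Nat.add_sub_cancel' hk] at hsymm
  rw [Nat.choose_mul ha, Nat.choose_mul hk, mul_assoc, hsymm, mul_assoc]

theorem Nat.sum_antidiagonal_choose_mul_choose (n m j : ℕ) :
    ∑ p ∈ antidiagonal n, p.1.choose m * p.2.choose j = (n + 1).choose (m + j + 1) := by
  induction n generalizing j with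
  | zero =>
    rcases m with _ | m <;> rcases j with _ | j <;> simp <;>
      exact (Nat.choose_eq_zero_of_lt (by omega)).symm
  | succ n ih =>
    rw [Nat.sum_antidiagonal_succ']
    rcases j with _ | j
    · have h0 := ih 0
      simp only [Nat.choose_zero_right, mul_one, Nat.add_zero] at h0 ⊢
      rw [h0, Nat.choose_succ_succ' (n + 1) m]
    · rw [Nat.choose_zero_succ, mul_zero, zero_add,
        sum_congr rfl fun p _ => by rw [Nat.choose_succ_succ', mul_add], sum_add_distrib, ih, ih,
        Nat.choose_succ_succ' (n + 1) (m + (j + 1)), Nat.add_assoc m j 1]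

theorem Nat.sum_Icc_choose_mul_choose_sub (n m j : ℕ) :
    ∑ k ∈ Icc m n, k.choose m * (n - k).choose j = (n + 1).choose (m + j + 1) := by
  rw [← Nat.sum_antidiagonal_choose_mul_choose, Nat.sum_antidiagonal_eq_sum_range_succ
    (fun p q => p.choose m * q.choose j)]
  refine sum_subset (fun k hk => by simp only [mem_Icc, mem_range] at hk ⊢; omega)
    fun k hk hk' => ?_
  simp only [mem_Icc, mem_range] at hk hk'
  rw [Nat.choose_eq_zero_of_lt (by omega), zero_mul]

theorem sum_Icc_choose_mul_choose_sub_div_choose {𝕜 : Type*} [Field 𝕜] [CharZero 𝕜]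
    {n a m : ℕ} (hma : m ≤ a) (han : a ≤ n) :
    ∑ k ∈ Icc m n, (a.choose m * (n - a).choose (k - m) : 𝕜) / n.choose k =
      (n + 1) / (a + 1) := by
  have hna : (n.choose a : 𝕜) ≠ 0 := Nat.cast_ne_zero.2 (Nat.choose_pos han).ne'
  have hterm : ∀ k ∈ Icc m n, (a.choose m * (n - a).choose (k - m) : 𝕜) / n.choose k =
      (k.choose m * (n - k).choose (a - m) : ℕ) / n.choose a := by
    intro k hk
    have hmk : m ≤ k := (mem_Icc.1 hk).1
    rw [div_eq_div_iff (Nat.cast_ne_zero.2 (Nat.choose_pos (mem_Icc.1 hk).2).ne') hna]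
    exact_mod_cast by
      linarith [Nat.choose_mul_choose_mul_choose_sub_sub_comm (n := n) hma hmk]
  rw [sum_congr rfl hterm, ← sum_div, ← Nat.cast_sum, Nat.sum_Icc_choose_mul_choose_sub,
    Nat.add_sub_cancel' hma, div_eq_div_iff hna (Nat.cast_add_one_ne_zero a)]
  exact_mod_cast (Nat.add_one_mul_choose_eq n a).symm

/-- Binomial identity used in the K-NN Shapley recursion: for `2 ≤ N`, `1 ≤ K`,
`1 ≤ i ≤ N−1`,
`∑_{k=0}^{N−2} (1/binom(N−2,k)) ∑_{m=0}^{min(K−1,k)} binom(i−1,m)·binom(N−i−1,k−m)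
  = min(K,i)·(N−1)/i`. -/
theorem binom_double_sum (N K i : ℕ) (hN : 2 ≤ N) (hK : 1 ≤ K)
    (hi1 : 1 ≤ i) (hi2 : i ≤ N - 1) :
    ∑ k ∈ Finset.range (N - 1), (1 / ((N - 2).choose k : ℝ)) *
        ∑ m ∈ Finset.range (min (K - 1) k + 1),
          ((i - 1).choose m : ℝ) * ((N - i - 1).choose (k - m) : ℝ) =
      min (K : ℝ) (i : ℝ) * ((N : ℝ) - 1) / (i : ℝ) := by
  obtain ⟨n, rfl⟩ : ∃ n, N = n + 2 := ⟨N - 2, by omega⟩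
  obtain ⟨a, rfl⟩ : ∃ a, i = a + 1 := ⟨i - 1, by omega⟩
  have han : a ≤ n := by omega
  simp only [show n + 2 - 1 = n + 1 by omega, Nat.add_sub_cancel,
    show n + 2 - (a + 1) - 1 = n - a by omega, one_div_mul_eq_div, mul_sum]
  have hswap : ∀ k m, k ∈ range (n + 1) ∧ m ∈ range (min (K - 1) k + 1) ↔
      k ∈ Icc m n ∧ m ∈ range K := by
    intro k m; simp only [mem_range, mem_Icc]; omega
  have hinner : ∀ m ∈ range K,
      ∑ k ∈ Icc m n, (a.choose m * (n - a).choose (k - m) : ℝ) / n.choose k =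
        if m ≤ a then (n + 1 : ℝ) / (a + 1) else 0 := by
    intro m _
    split_ifs with hma
    · exact sum_Icc_choose_mul_choose_sub_div_choose hma han
    · simp [Nat.choose_eq_zero_of_lt (not_le.1 hma)]
  have hcount : (range K).filter (· ≤ a) = range (min K (a + 1)) := by
    ext m; simp only [mem_filter, mem_range]; omega
  rw [sum_comm' hswap, sum_congr rfl hinner, ← sum_filter, hcount, sum_const, card_range,
    nsmul_eq_mul, Nat.cast_min]
  push_cast
  ring
end

section
/- For all natural numbers M, N and every integer i with 0 ≤ i ≤ N, ∑_{j=0}^{M} binom(N,i)·binom(M,j)/binom(N+M+1,i+j+1) = (i+1)(M+N+2)/((N+2)(N+1)). -/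
open Finset Nat

lemma castAddChoose (a b : ℕ) : (((a+b).choose b : ℕ) : ℝ) = (a+b)! / ((a)! * (b)!) := by
  have h := Nat.add_choose_mul_factorial_mul_factorial a b
  have ha : ((a)! : ℝ) ≠ 0 := by exact_mod_cast (Nat.factorial_pos a).ne'
  have hb : ((b)! : ℝ) ≠ 0 := by exact_mod_cast (Nat.factorial_pos b).ne'
  field_simp
  push_cast [← h]; ring

lemma inv_choose_pascal (k b : ℕ) :
    (1:ℝ)/((k+b+1).choose k) + 1/((k+b+1).choose (k+1)) =
      ((k:ℝ)+(b:ℝ)+2)/((k:ℝ)+(b:ℝ)+1) * (1/((k+b).choose k)) := by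
  have e1 : (k+b+1).choose k = ((b+1)+k).choose k := by ring_nf
  have e2 : (k+b+1).choose (k+1) = (b+(k+1)).choose (k+1) := by ring_nf
  have e3 : (k+b).choose k = (b+k).choose k := by ring_nf
  rw [e1, e2, e3, castAddChoose, castAddChoose, castAddChoose]
  have f1 : (b+1+k) = (k+b)+1 := by omega
  have f2 : (b+(k+1)) = (k+b)+1 := by omega
  have f3 : (b+k) = k+b := by omega
  rw [f1, f2, f3]
  have h1 : (((k+b+1)! : ℕ) : ℝ) = ((k:ℝ)+b+1) * ((k+b)! : ℕ) := by
    rw [Nat.factorial_succ]; push_cast; ring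
  have h2 : (((b+1)! : ℕ) : ℝ) = ((b:ℝ)+1) * ((b)! : ℕ) := by
    rw [Nat.factorial_succ]; push_cast; ring
  have h3 : (((k+1)! : ℕ) : ℝ) = ((k:ℝ)+1) * ((k)! : ℕ) := by
    rw [Nat.factorial_succ]; push_cast; ring
  rw [h1, h2, h3]
  have hkb : (((k+b)! : ℕ) : ℝ) ≠ 0 := by exact_mod_cast (Nat.factorial_pos _).ne'
  have hk : (((k)! : ℕ) : ℝ) ≠ 0 := by exact_mod_cast (Nat.factorial_pos _).ne'
  have hb : (((b)! : ℕ) : ℝ) ≠ 0 := by exact_mod_cast (Nat.factorial_pos _).ne'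
  have p1 : (0:ℝ) < (k:ℝ)+b+1 := by positivity
  have p2 : (0:ℝ) < (b:ℝ)+1 := by positivity
  have p3 : (0:ℝ) < (k:ℝ)+1 := by positivity
  field_simp
  ring

/-- Binomial identity: for `i ≤ N`,
`∑_{j=0}^{M} binom(N,i)·binom(M,j)/binom(N+M+1,i+j+1)
  = (i+1)(M+N+2)/((N+2)(N+1))`. -/
theorem binom_ratio_sum_shifted (M N i : ℕ) (hi : i ≤ N) :
    ∑ j ∈ Finset.range (M + 1),
      ((N.choose i : ℝ) * (M.choose j : ℝ)) / ((N + M + 1).choose (i + j + 1) : ℝ) =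
      ((i : ℝ) + 1) * ((M : ℝ) + (N : ℝ) + 2) / (((N : ℝ) + 2) * ((N : ℝ) + 1)) := by
  induction M with
  | zero =>
    rw [Finset.sum_range_one]
    have h := Nat.add_one_mul_choose_eq N i
    have hpos : 0 < (N+1).choose (i+1) := Nat.choose_pos (by omega)
    have hc : (((N+1).choose (i+1) : ℕ) : ℝ) ≠ 0 := by exact_mod_cast hpos.ne'
    have h' : ((N:ℝ)+1) * (N.choose i : ℕ) = (((N+1).choose (i+1) : ℕ) : ℝ) * ((i:ℝ)+1) := by
      exact_mod_cast h
    have hN1 : ((N:ℝ)+1) ≠ 0 := by positivity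
    have hN2 : ((N:ℝ)+2) ≠ 0 := by positivity
    simp only [Nat.choose_self, Nat.cast_one, mul_one]
    rw [div_eq_div_iff hc (by positivity)]
    push_cast
    nlinarith [h']
  | succ M ih =>
    -- abbreviations
    set c : ℝ := ((N.choose i : ℕ) : ℝ) with hcdef
    have hsplit :
        (∑ j ∈ Finset.range (M + 1 + 1),
          (c * ((M+1).choose j : ℕ)) / (((N + (M+1) + 1).choose (i + j + 1) : ℕ) : ℝ)) =
        (∑ j ∈ Finset.range (M + 1),
          (c * (M.choose j : ℕ)) / (((N + M + 2).choose (i + j + 1) : ℕ) : ℝ)) +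
        (∑ j ∈ Finset.range (M + 1),
          (c * (M.choose j : ℕ)) / (((N + M + 2).choose (i + j + 2) : ℕ) : ℝ)) := by
      rw [Finset.sum_range_succ']
      have hterm : ∀ j, (c * (((M+1).choose (j+1) : ℕ)) : ℝ) / (((N + (M+1) + 1).choose (i + (j+1) + 1) : ℕ) : ℝ)
          = (c * (M.choose j : ℕ)) / (((N + M + 2).choose (i + j + 2) : ℕ) : ℝ)
            + (c * (M.choose (j+1) : ℕ)) / (((N + M + 2).choose (i + j + 2) : ℕ) : ℝ) := by
        intro j
        have e : (M+1).choose (j+1) = M.choose j + M.choose (j+1) := Nat.choose_succ_succ' M j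
        have e2 : N + (M+1) + 1 = N + M + 2 := by omega
        have e3 : i + (j+1) + 1 = i + j + 2 := by omega
        rw [e, e2, e3]
        push_cast
        ring
      simp only [hterm]
      rw [Finset.sum_add_distrib]
      have hshift :
          (∑ j ∈ Finset.range (M + 1),
            (c * (M.choose (j+1) : ℕ)) / (((N + M + 2).choose (i + j + 2) : ℕ) : ℝ))
          + (c * (((M+1).choose 0 : ℕ)) : ℝ) / (((N + (M+1) + 1).choose (i + 0 + 1) : ℕ) : ℝ)
          = ∑ j ∈ Finset.range (M + 1),
            (c * (M.choose j : ℕ)) / (((N + M + 2).choose (i + j + 1) : ℕ) : ℝ) := by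
        have := (Finset.sum_range_succ'
          (fun j => (c * (M.choose j : ℕ)) / (((N + M + 2).choose (i + j + 1) : ℕ) : ℝ)) (M+1))
        rw [Finset.sum_range_succ
          (fun j => (c * (M.choose j : ℕ)) / (((N + M + 2).choose (i + j + 1) : ℕ) : ℝ)) (M+1)] at this
        simp only [Nat.choose_succ_self, Nat.cast_zero, mul_zero, zero_div, add_zero,
          Nat.choose_zero_right, Nat.cast_one, mul_one] at this ⊢
        have e2 : N + (M+1) + 1 = N + M + 2 := by omega
        rw [e2]
        exact this.symm
      rw [add_assoc, hshift, add_comm]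
    rw [hsplit, ← Finset.sum_add_distrib]
    have hterm2 : ∀ j ∈ Finset.range (M+1),
        (c * (M.choose j : ℕ)) / (((N + M + 2).choose (i + j + 1) : ℕ) : ℝ)
        + (c * (M.choose j : ℕ)) / (((N + M + 2).choose (i + j + 2) : ℕ) : ℝ)
        = ((N:ℝ)+(M:ℝ)+3)/((N:ℝ)+(M:ℝ)+2) *
            ((c * (M.choose j : ℕ)) / (((N + M + 1).choose (i + j + 1) : ℕ) : ℝ)) := by
      intro j hj
      have hjM : j ≤ M := Nat.lt_succ_iff.mp (Finset.mem_range.mp hj)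
      obtain ⟨b, hb⟩ : ∃ b, (i+j+1) + b = N+M+1 := ⟨N+M+1-(i+j+1), by omega⟩
      have hp := inv_choose_pascal (i+j+1) b
      have e1 : i+j+1+b+1 = N+M+2 := by omega
      rw [e1, hb] at hp
      have hcast : ((i+j+1 : ℕ):ℝ) + (b:ℝ) = (N:ℝ)+(M:ℝ)+1 := by
        have : (((i+j+1) + b : ℕ) : ℝ) = ((N+M+1 : ℕ) : ℝ) := by rw [hb]
        push_cast at this ⊢
        linarith
      have c2 : ((i+j+1:ℕ):ℝ)+(b:ℝ)+2 = (N:ℝ)+(M:ℝ)+3 := by linarith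
      have c1 : ((i+j+1:ℕ):ℝ)+(b:ℝ)+1 = (N:ℝ)+(M:ℝ)+2 := by linarith
      rw [c1, c2] at hp
      have expand : (c * (M.choose j : ℕ)) / (((N + M + 2).choose (i + j + 1) : ℕ) : ℝ)
          + (c * (M.choose j : ℕ)) / (((N + M + 2).choose (i + j + 2) : ℕ) : ℝ)
          = (c * (M.choose j : ℕ)) * ((1:ℝ)/(((N + M + 2).choose (i + j + 1) : ℕ) : ℝ)
              + 1/(((N + M + 2).choose (i + j + 2) : ℕ) : ℝ)) := by ring
      rw [expand]
      have e4 : i+j+1+1 = i+j+2 := rfl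
      rw [e4] at hp
      rw [hp]
      ring
    rw [Finset.sum_congr rfl hterm2, ← Finset.mul_sum, ih]
    have h1 : ((N:ℝ)+(M:ℝ)+2) ≠ 0 := by positivity
    have h2 : ((N:ℝ)+2) ≠ 0 := by positivity
    have h3 : ((N:ℝ)+1) ≠ 0 := by positivity
    push_cast
    field_simp
    ring
end

section
/- Let ε > 0, δ ∈ (0,1) and r > 0, and set h(u) = (1+u)·log(1+u) − u, q_i = 0 for 1 ≤ i ≤ K and q_i = (i−K)/i for K+1 ≤ i ≤ N. If the number T of sampled permutations satisfies ∑_{i=1}^{N} exp(−T·(1−q_i²)·h(ε/((1−q_i²)·r))) ≤ δ/2, then for T independent uniformly random permutations π_1,…,π_T of {1,…,N} and the Monte Carlo estimates ŝ_i = (1/T)·∑_{t=1}^{T} φ_i(π_t), one has P[ max_{1≤i≤N} |ŝ_i − s_i| ≥ ε ] ≤ δ. -/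
open Finset
open scoped Classical

/-- The marginal contribution `φ_i(π) = ν(P_i^π ∪ {i}) − ν(P_i^π)` of point `i`,
where `P_i^π` is the set of points preceding `i` in the permutation `π`
(`π j` being the position of point `j`). -/
noncomputable def margContrib {N : ℕ} (ν : Finset (Fin N) → ℝ) (i : Fin N)
    (π : Equiv.Perm (Fin N)) : ℝ :=
  ν (insert i (Finset.univ.filter (fun j => π j < π i))) -
    ν (Finset.univ.filter (fun j => π j < π i))

/-- The Shapley value of point `i`: the average of its marginal contribution
over all `N!` permutations. -/
noncomputable def shapleyPerm {N : ℕ} (ν : Finset (Fin N) → ℝ) (i : Fin N) : ℝ :=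
  (1 / (Nat.factorial N : ℝ)) * ∑ π : Equiv.Perm (Fin N), margContrib ν i π

/-!
The Monte Carlo estimate `ŝ_i` averages `T` i.i.d. draws of the bounded variable `φ_i(π)`, so
Bennett's inequality bounds `P[|ŝ_i − s_i| ≥ ε]` by `2 exp(−T (v/r²) h(ε r / v))` for any bound
`v` on the second moment of `φ_i`, and a union bound over `i` finishes. The K-NN structure enters
only through `v`: by locality `φ_i(π) = 0` unless fewer than `K` of the points `1, …, i` precede
`i` in `π`, and by symmetry among these `i` points this happens for at most a fraction
`K / i = 1 − q_i` of the permutations, so `v = (1 − q_i) r² ≤ (1 − q_i²) r²` works.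
-/

open Equiv

noncomputable def bennettH (u : ℝ) : ℝ := (1 + u) * Real.log (1 + u) - u

namespace Real

lemma exp_sub_one_sub_eq_tsum (y : ℝ) :
    exp y - 1 - y = ∑' n : ℕ, y ^ (n + 2) / (n + 2).factorial := by
  have hexp : exp y = ∑' n : ℕ, y ^ n / n.factorial := by
    rw [exp_eq_exp_ℝ, NormedSpace.exp_eq_tsum_div]
  rw [hexp, ← (summable_pow_div_factorial y).sum_add_tsum_nat_add 2]
  simp [Finset.sum_range_succ]
  ring

/-- Comparing the series termwise: `(l x)ⁿ ≤ (x / r)² (l r)ⁿ` for `n ≥ 2`. -/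
lemma exp_mul_sub_one_sub_le {l x r : ℝ} (hl : 0 ≤ l) (hr : 0 < r) (hx : |x| ≤ r) :
    exp (l * x) - 1 - l * x ≤ (x / r) ^ 2 * (exp (l * r) - 1 - l * r) := by
  rw [exp_sub_one_sub_eq_tsum, exp_sub_one_sub_eq_tsum, ← tsum_mul_left]
  refine Summable.tsum_le_tsum (fun n => ?_)
    ((summable_nat_add_iff 2).2 (summable_pow_div_factorial _))
    (((summable_nat_add_iff 2).2 (summable_pow_div_factorial _)).mul_left _)
  have hxn : x ^ (n + 2) ≤ x ^ 2 * r ^ n := calc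
    x ^ (n + 2) ≤ |x| ^ 2 * |x| ^ n := by rw [← pow_add, add_comm, ← abs_pow]; exact le_abs_self _
    _ ≤ x ^ 2 * r ^ n := by rw [sq_abs]; gcongr
  calc (l * x) ^ (n + 2) / (n + 2).factorial
      = l ^ (n + 2) * x ^ (n + 2) / (n + 2).factorial := by ring
    _ ≤ l ^ (n + 2) * (x ^ 2 * r ^ n) / (n + 2).factorial := by gcongr
    _ = (x / r) ^ 2 * ((l * r) ^ (n + 2) / (n + 2).factorial) := by field_simp; ring

end Real

lemma card_mul_le_sum_pow {α : Type*} [Fintype α] {T : ℕ} {g : α → ℝ}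
    {E : Finset (Fin T → α)} (hg : ∀ a, 0 ≤ g a) {c : ℝ} (hE : ∀ ω ∈ E, c ≤ ∏ t, g (ω t)) :
    #E * c ≤ (∑ a, g a) ^ T := by
  classical
  calc #E * c = ∑ _ω ∈ E, c := by rw [Finset.sum_const, nsmul_eq_mul]
    _ ≤ ∑ ω ∈ E, ∏ t, g (ω t) := Finset.sum_le_sum hE
    _ ≤ ∑ ω : Fin T → α, ∏ t, g (ω t) :=
        Finset.sum_le_sum_of_subset_of_nonneg (Finset.subset_univ E)
          fun ω _ _ => Finset.prod_nonneg fun t _ => hg _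
    _ = (∑ a, g a) ^ T := by
        rw [← Fintype.piFinset_univ, ← Finset.prod_univ_sum, Finset.prod_const, Finset.card_univ,
          Fintype.card_fin]

section Bennett

open Real

variable {α : Type*} [Fintype α] [Nonempty α] {X : α → ℝ} {r w ε : ℝ}

lemma sum_exp_mul_le_card_mul_exp (hr : 0 < r) (hX : ∀ a, |X a| ≤ r)
    (hX2 : ∑ a, X a ^ 2 ≤ w * r ^ 2 * Fintype.card α) {l : ℝ} (hl : 0 ≤ l) :
    ∑ a, exp (l * X a) ≤ Fintype.card α *
      exp (l * ((∑ a, X a) / Fintype.card α) + w * (exp (l * r) - 1 - l * r)) := by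
  set M : ℝ := (Fintype.card α : ℝ)
  set C := exp (l * r) - 1 - l * r
  have hM : 0 < M := by positivity
  have hC : 0 ≤ C := by linarith [add_one_le_exp (l * r)]
  calc ∑ a, exp (l * X a) ≤ ∑ a, (1 + l * X a + (X a / r) ^ 2 * C) :=
        Finset.sum_le_sum fun a _ => by linarith [exp_mul_sub_one_sub_le hl hr (hX a)]
    _ = M + l * ∑ a, X a + (∑ a, X a ^ 2) / r ^ 2 * C := by
        simp only [Finset.sum_add_distrib, Finset.sum_const, Finset.card_univ, nsmul_eq_mul,
          mul_one, Finset.mul_sum, Finset.sum_mul, Finset.sum_div, div_pow, M]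
    _ ≤ M + l * ∑ a, X a + w * r ^ 2 * M / r ^ 2 * C := by gcongr
    _ = M * (1 + (l * ((∑ a, X a) / M) + w * C)) := by field_simp; ring
    _ ≤ M * exp (l * ((∑ a, X a) / M) + w * C) := by
        gcongr; linarith [add_one_le_exp (l * ((∑ a, X a) / M) + w * C)]

lemma card_upper_tail_le_bennett (T : ℕ) (hr : 0 < r) (hw : 0 < w) (hε : 0 < ε)
    (hX : ∀ a, |X a| ≤ r)
    (hX2 : ∑ a, X a ^ 2 ≤ w * r ^ 2 * Fintype.card α) :
    (#{ω : Fin T → α | T * ((∑ a, X a) / Fintype.card α + ε) ≤ ∑ t, X (ω t)} : ℝ) ≤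
      Fintype.card α ^ T * exp (-T * w * bennettH (ε / (w * r))) := by
  set M : ℝ := (Fintype.card α : ℝ)
  set μ := (∑ a, X a) / M
  set u := ε / (w * r)
  have hu : 0 < u := by positivity
  -- the Chernoff exponent is minimised at the tilt `l = log (1 + u) / r`
  set l := log (1 + u) / r
  have hl : 0 ≤ l := div_nonneg (log_nonneg (by linarith)) hr.le
  have hlr : l * r = log (1 + u) := div_mul_cancel₀ _ hr.ne'
  have hchernoff := card_mul_le_sum_pow (fun a => (exp_pos (l * X a)).le)
    (E := {ω : Fin T → α | T * (μ + ε) ≤ ∑ t, X (ω t)}) (c := exp (l * (T * (μ + ε))))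
    fun ω hω => by
      rw [← exp_sum, ← Finset.mul_sum]
      exact exp_le_exp.2 (mul_le_mul_of_nonneg_left (Finset.mem_filter.1 hω).2 hl)
  have hmgf := pow_le_pow_left₀ (Finset.sum_nonneg fun a _ => (exp_pos (l * X a)).le)
    (sum_exp_mul_le_card_mul_exp hr hX hX2 hl) T
  rw [mul_pow, ← exp_nat_mul] at hmgf
  rw [← le_div_iff₀ (exp_pos _)] at hchernoff
  calc _ ≤ _ := hchernoff
    _ ≤ M ^ T * exp (T * (l * μ + w * (exp (l * r) - 1 - l * r))) / exp (l * (T * (μ + ε))) := by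
        gcongr
    _ = M ^ T * exp (-T * w * bennettH u) := by
        rw [mul_div_assoc, ← exp_sub, hlr, exp_log (by linarith), bennettH]
        congr 2
        simp only [l, u]
        field_simp
        ring

lemma card_abs_tail_le_bennett (T : ℕ) (hr : 0 < r) (hw : 0 < w) (hε : 0 < ε)
    (hX : ∀ a, |X a| ≤ r) (hX2 : ∑ a, X a ^ 2 ≤ w * r ^ 2 * Fintype.card α) :
    (#{ω : Fin T → α | ε ≤ |1 / (T : ℝ) * ∑ t, X (ω t) - (∑ a, X a) / Fintype.card α|} : ℝ) ≤
      2 * Fintype.card α ^ T * exp (-T * w * bennettH (ε / (w * r))) := by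
  rcases Nat.eq_zero_or_pos T with rfl | hT
  · calc (#{ω : Fin 0 → α | _} : ℝ) ≤ Fintype.card (Fin 0 → α) := by
          exact_mod_cast Finset.card_le_univ _
      _ ≤ _ := by norm_num
  have upper := card_upper_tail_le_bennett T hr hw hε hX hX2
  have lower := card_upper_tail_le_bennett (X := fun a => -X a) T hr hw hε (by simpa using hX)
    (by simpa using hX2)
  simp only [Finset.sum_neg_distrib] at lower
  have hsub : ∀ ω : Fin T → α,
      ε ≤ |1 / (T : ℝ) * ∑ t, X (ω t) - (∑ a, X a) / Fintype.card α| →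
      T * ((∑ a, X a) / Fintype.card α + ε) ≤ ∑ t, X (ω t) ∨
      T * ((-∑ a, X a) / Fintype.card α + ε) ≤ -∑ t, X (ω t) := by
    intro ω hω
    have hT' : (0 : ℝ) < T := by exact_mod_cast hT
    have hS : ∑ t, X (ω t) = T * (1 / T * ∑ t, X (ω t)) := by field_simp
    rw [hS, neg_div]
    rcases le_abs'.1 hω with h | h
    · right
      nlinarith [mul_le_mul_of_nonneg_left h hT'.le]
    · left
      nlinarith [mul_le_mul_of_nonneg_left h hT'.le]
  calc _ ≤ (#{ω : Fin T → α | T * ((∑ a, X a) / Fintype.card α + ε) ≤ ∑ t, X (ω t) ∨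
        T * ((-∑ a, X a) / Fintype.card α + ε) ≤ -∑ t, X (ω t)} : ℝ) := by
        exact_mod_cast Finset.card_le_card (Finset.monotone_filter_right _ fun ω _ => hsub ω)
    _ ≤ _ := by
        rw [Finset.filter_or]
        refine (Nat.cast_le.2 (Finset.card_union_le _ _)).trans ?_
        push_cast
        linarith

end Bennett

section PrecCount

variable {α : Type*} [LinearOrder α] {s : Finset α}

def precCount (s : Finset α) (π : Perm α) (j : α) : ℕ := #{k ∈ s | π k < π j}

lemma precCount_mul_swap {j j' : α} (hj : j ∈ s) (hj' : j' ∈ s) (π : Perm α) :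
    precCount s (π * swap j j') j = precCount s π j' := by
  have hmem : ∀ k ∈ s, swap j j' k ∈ s := fun k hk => by
    rw [swap_apply_def]; split_ifs <;> assumption
  refine Finset.card_nbij' (swap j j') (swap j j') (fun k hk => ?_) (fun k hk => ?_)
    (fun k _ => swap_apply_self _ _ _) (fun k _ => swap_apply_self _ _ _)
  · simp only [Finset.coe_filter, Set.mem_ofPred_eq, Perm.mul_apply, swap_apply_left] at hk ⊢
    exact ⟨hmem k hk.1, hk.2⟩
  · simp only [Finset.coe_filter, Set.mem_ofPred_eq, Perm.mul_apply, swap_apply_left,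
      swap_apply_self] at hk ⊢
    exact ⟨hmem k hk.1, hk.2⟩

lemma card_precCount_lt_eq [Fintype α] {j j' : α} (hj : j ∈ s) (hj' : j' ∈ s) (K : ℕ) :
    #{π : Perm α | precCount s π j < K} = #{π : Perm α | precCount s π j' < K} := by
  refine Finset.card_nbij' (· * swap j j') (· * swap j j') (fun π hπ => ?_) (fun π hπ => ?_)
    (fun π _ => by simp [mul_assoc]) (fun π _ => by simp [mul_assoc])
  · simp only [Finset.coe_filter, Finset.mem_univ, true_and, Set.mem_ofPred_eq] at hπ ⊢
    rwa [swap_comm, precCount_mul_swap hj' hj]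
  · simp only [Finset.coe_filter, Finset.mem_univ, true_and, Set.mem_ofPred_eq] at hπ ⊢
    rwa [precCount_mul_swap hj hj']

lemma precCount_lt_precCount {π : Perm α} {j j' : α} (hj : j ∈ s) (h : π j < π j') :
    precCount s π j < precCount s π j' := by
  refine Finset.card_lt_card ((Finset.ssubset_iff_of_subset fun k hk => ?_).2 ⟨j, ?_, ?_⟩)
  · simp only [Finset.mem_filter] at hk ⊢
    exact ⟨hk.1, hk.2.trans h⟩
  · simpa using ⟨hj, h⟩
  · simp

lemma injOn_precCount (s : Finset α) (π : Perm α) : Set.InjOn (precCount s π) s := by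
  intro j hj j' hj' h
  by_contra hne
  rcases lt_or_gt_of_ne (π.injective.ne hne) with hlt | hlt
  · exact (precCount_lt_precCount hj hlt).ne h
  · exact (precCount_lt_precCount hj' hlt).ne' h

lemma card_filter_precCount_lt_le (s : Finset α) (π : Perm α) (K : ℕ) :
    #{j ∈ s | precCount s π j < K} ≤ K := by
  simpa using Finset.card_le_card_of_injOn (t := Finset.range K) (precCount s π)
    (fun j hj => by simpa using (Finset.mem_filter.1 hj).2)
    ((injOn_precCount s π).mono (Finset.coe_subset.2 (Finset.filter_subset _ _)))

/-- Double counting the pairs `(j, π)` with `precCount s π j < K`: every `j ∈ s` lies in as many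
pairs as `i`, and every `π` in at most `K`, since `precCount s π` is injective on `s`. -/
lemma card_mul_card_precCount_lt_le [Fintype α] {i : α} (hi : i ∈ s) (K : ℕ) :
    #s * #{π : Perm α | precCount s π i < K} ≤ Fintype.card (Perm α) * K :=
  Finset.card_mul_le_card_mul (fun j π => precCount s π j < K)
    (fun _ hj => (card_precCount_lt_eq hi hj K).le) fun π _ => card_filter_precCount_lt_le s π K

end PrecCount

lemma card_filter_exists_le {ι β : Type*} [Fintype ι] (s : Finset β) (p : ι → β → Prop)
    [∀ i, DecidablePred (p i)] [DecidablePred fun x => ∃ i, p i x] :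
    #{x ∈ s | ∃ i, p i x} ≤ ∑ i, #{x ∈ s | p i x} := by
  classical
  calc #{x ∈ s | ∃ i, p i x} ≤ #(Finset.univ.biUnion fun i => {x ∈ s | p i x}) :=
        Finset.card_le_card fun x hx => by simpa using hx
    _ ≤ _ := Finset.card_biUnion_le

/-- The paper's `q_n` for the point with 1-based index `n`. -/
noncomputable def knnQ (K n : ℕ) : ℝ := if n ≤ K then 0 else ((n - K : ℕ) : ℝ) / n

section KNN

variable {N K : ℕ}

lemma knnQ_nonneg (n : ℕ) : 0 ≤ knnQ K n := by
  unfold knnQ; split_ifs <;> positivity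

lemma knnQ_lt_one (hK : 1 ≤ K) (n : ℕ) : knnQ K n < 1 := by
  unfold knnQ
  split_ifs with h
  · exact one_pos
  · rw [div_lt_one (by exact_mod_cast (show 0 < n by omega))]
    exact_mod_cast Nat.sub_lt (by omega) hK

lemma le_one_sub_knnQ_mul {n : ℕ} {c M : ℝ} (hcM : c ≤ M) (hc : n * c ≤ K * M) :
    c ≤ (1 - knnQ K n) * M := by
  unfold knnQ
  split_ifs with h
  · simpa using hcM
  · have hn : (0 : ℝ) < n := by exact_mod_cast (show 0 < n by omega)
    rw [Nat.cast_sub (by omega), one_sub_div hn.ne', sub_sub_cancel, div_mul_eq_mul_div,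
      le_div_iff₀ hn]
    linarith

def IsKNNLocal (K : ℕ) (ν : Finset (Fin N) → ℝ) : Prop :=
  ∀ (S : Finset (Fin N)) (i : Fin N), i ∉ S → K ≤ #{j ∈ S | j < i} → ν (insert i S) = ν S

variable {ν : Finset (Fin N) → ℝ}

lemma margContrib_eq_zero_of_le_precCount (hloc : IsKNNLocal K ν) {i : Fin N} {π : Perm (Fin N)}
    (h : K ≤ precCount (Finset.Iic i) π i) :
    margContrib ν i π = 0 := by
  rw [precCount] at h
  rw [margContrib, hloc _ i (by simp), sub_self]
  convert h using 2
  ext j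
  simp only [Finset.mem_filter, Finset.mem_univ, true_and, Finset.mem_Iic]
  exact ⟨fun h => ⟨h.2.le, h.1⟩,
    fun h => ⟨h.2, h.1.lt_of_ne fun hji => (hji ▸ h.2).false⟩⟩

lemma sum_sq_margContrib_le (hloc : IsKNNLocal K ν) {r : ℝ} {i : Fin N}
    (hrange : ∀ π, |margContrib ν i π| ≤ r) :
    ∑ π, margContrib ν i π ^ 2 ≤
      r ^ 2 * #{π : Perm (Fin N) | precCount (Finset.Iic i) π i < K} := by
  rw [← Finset.sum_filter_of_ne (p := fun π => precCount (Finset.Iic i) π i < K) fun π _ hπ => ?_]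
  · calc _ ≤ ∑ _π ∈ {π : Perm (Fin N) | precCount (Finset.Iic i) π i < K}, r ^ 2 :=
          Finset.sum_le_sum fun π _ => by rw [← sq_abs]; gcongr; exact hrange π
      _ = _ := by rw [Finset.sum_const, nsmul_eq_mul, mul_comm]
  · by_contra hK
    exact hπ (by rw [margContrib_eq_zero_of_le_precCount hloc (not_lt.1 hK)]; ring)

lemma sum_sq_margContrib_le_one_sub_knnQ (hloc : IsKNNLocal K ν) {r : ℝ} {i : Fin N}
    (hrange : ∀ π, |margContrib ν i π| ≤ r) :
    ∑ π, margContrib ν i π ^ 2 ≤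
      (1 - knnQ K ((i : ℕ) + 1)) * r ^ 2 * Fintype.card (Perm (Fin N)) := by
  set c := #{π : Perm (Fin N) | precCount (Finset.Iic i) π i < K}
  have hcM : (c : ℝ) ≤ Fintype.card (Perm (Fin N)) := by exact_mod_cast Finset.card_le_univ _
  have hc : (((i : ℕ) + 1 : ℕ) : ℝ) * c ≤ K * Fintype.card (Perm (Fin N)) := by
    have := card_mul_card_precCount_lt_le (Finset.mem_Iic.2 (le_refl i)) K
    rw [Fin.card_Iic, mul_comm _ K] at this
    exact_mod_cast this
  calc _ ≤ r ^ 2 * c := sum_sq_margContrib_le hloc hrange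
    _ ≤ r ^ 2 * ((1 - knnQ K ((i : ℕ) + 1)) * Fintype.card (Perm (Fin N))) := by
        gcongr; exact le_one_sub_knnQ_mul hcM hc
    _ = _ := by ring

lemma shapleyPerm_eq_sum_div (ν : Finset (Fin N) → ℝ) (i : Fin N) :
    shapleyPerm ν i = (∑ π, margContrib ν i π) / Fintype.card (Perm (Fin N)) := by
  rw [shapleyPerm, Fintype.card_perm, Fintype.card_fin, one_div_mul_eq_div]

lemma card_shapleyPerm_tail_le (hK : 1 ≤ K) (hloc : IsKNNLocal K ν) {r ε : ℝ} (hr : 0 < r)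
    (hε : 0 < ε) {i : Fin N} (hrange : ∀ π, |margContrib ν i π| ≤ r) (T : ℕ) :
    (#{ω : Fin T → Perm (Fin N) |
        ε ≤ |1 / (T : ℝ) * ∑ t, margContrib ν i (ω t) - shapleyPerm ν i|} : ℝ) ≤
      2 * Fintype.card (Perm (Fin N)) ^ T * Real.exp (-T * (1 - knnQ K ((i : ℕ) + 1) ^ 2) *
        bennettH (ε / ((1 - knnQ K ((i : ℕ) + 1) ^ 2) * r))) := by
  have hq0 := knnQ_nonneg (K := K) ((i : ℕ) + 1)
  have hq1 := knnQ_lt_one hK ((i : ℕ) + 1)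
  rw [shapleyPerm_eq_sum_div]
  refine card_abs_tail_le_bennett T hr (by nlinarith) hε hrange
    ((sum_sq_margContrib_le_one_sub_knnQ hloc hrange).trans ?_)
  gcongr
  nlinarith

end KNN

theorem mc_bennett_bound_general (N K T : ℕ) (hK1 : 1 ≤ K)
    (ν : Finset (Fin N) → ℝ)
    (hloc : ∀ (S : Finset (Fin N)) (i : Fin N), i ∉ S →
      K ≤ (S.filter (fun j => j < i)).card → ν (insert i S) = ν S)
    (r ε δ : ℝ) (hr : 0 < r) (hε : 0 < ε)
    (hrange : ∀ (i : Fin N) (π : Equiv.Perm (Fin N)), |margContrib ν i π| ≤ r)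
    (q : Fin N → ℝ)
    (hq : ∀ i : Fin N,
      q i = if (i : ℕ) + 1 ≤ K then 0
        else (((i : ℕ) + 1 - K : ℕ) : ℝ) / ((i : ℕ) + 1))
    (hT : ∑ i : Fin N,
        Real.exp (-(T : ℝ) * (1 - q i ^ 2) *
          ((1 + ε / ((1 - q i ^ 2) * r)) * Real.log (1 + ε / ((1 - q i ^ 2) * r)) -
            ε / ((1 - q i ^ 2) * r))) ≤ δ / 2) :
    ((Finset.univ.filter (fun ω : Fin T → Equiv.Perm (Fin N) =>
          ∃ i : Fin N,
            ε ≤ |(1 / (T : ℝ)) * (∑ t, margContrib ν i (ω t)) - shapleyPerm ν i|)).card : ℝ) /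
        (Fintype.card (Fin T → Equiv.Perm (Fin N)) : ℝ) ≤ δ := by
  obtain rfl : q = fun i : Fin N => knnQ K ((i : ℕ) + 1) := funext fun i => by
    rw [hq, knnQ]; push_cast; rfl
  set M : ℝ := (Fintype.card (Perm (Fin N)) : ℝ)
  rw [Fintype.card_fun, Fintype.card_fin, Nat.cast_pow, div_le_iff₀ (by positivity)]
  calc _ ≤ ∑ i : Fin N, (#{ω : Fin T → Perm (Fin N) |
          ε ≤ |1 / (T : ℝ) * ∑ t, margContrib ν i (ω t) - shapleyPerm ν i|} : ℝ) := by
        exact_mod_cast card_filter_exists_le _ fun i (ω : Fin T → Perm (Fin N)) =>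
          ε ≤ |1 / (T : ℝ) * ∑ t, margContrib ν i (ω t) - shapleyPerm ν i|
    _ ≤ ∑ i : Fin N, 2 * M ^ T * Real.exp (-T * (1 - knnQ K ((i : ℕ) + 1) ^ 2) *
          bennettH (ε / ((1 - knnQ K ((i : ℕ) + 1) ^ 2) * r))) :=
        Finset.sum_le_sum fun i _ => card_shapleyPerm_tail_le hK1 hloc hr hε (hrange i) T
    _ ≤ 2 * M ^ T * (δ / 2) := by
        rw [← Finset.mul_sum]
        exact mul_le_mul_of_nonneg_left hT (by positivity)
    _ = δ * M ^ T := by ring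

/-- Bennett-type sample-complexity bound for the Monte Carlo approximation of
the Shapley values of a K-NN-type utility: if `T` satisfies
`∑_{i=1}^N exp(−T(1−q_i²)h(ε/((1−q_i²)r))) ≤ δ/2` with
`h(u) = (1+u)log(1+u) − u`, `q_i = 0` for `i ≤ K` and `q_i = (i−K)/i` otherwise,
then with probability at least `1−δ` over `T` i.i.d. uniform permutations all
`N` Monte Carlo estimates are within `ε` of the true Shapley values.
(Points are indexed by `Fin N`, point `i : Fin N` having 1-based index
`(i:ℕ)+1`, sorted by increasing distance to the test point.) -/
theorem mc_bennett_bound (N K T : ℕ) (hK1 : 1 ≤ K) (hKN : K ≤ N)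
    (ν : Finset (Fin N) → ℝ)
    (hloc : ∀ (S : Finset (Fin N)) (i : Fin N), i ∉ S →
      K ≤ (S.filter (fun j => j < i)).card → ν (insert i S) = ν S)
    (r ε δ : ℝ) (hr : 0 < r) (hε : 0 < ε) (hδ0 : 0 < δ) (hδ1 : δ < 1)
    (hrange : ∀ (i : Fin N) (π : Equiv.Perm (Fin N)), |margContrib ν i π| ≤ r)
    (q : Fin N → ℝ)
    (hq : ∀ i : Fin N,
      q i = if (i : ℕ) + 1 ≤ K then 0
        else (((i : ℕ) + 1 - K : ℕ) : ℝ) / ((i : ℕ) + 1))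
    (hT : ∑ i : Fin N,
        Real.exp (-(T : ℝ) * (1 - q i ^ 2) *
          ((1 + ε / ((1 - q i ^ 2) * r)) * Real.log (1 + ε / ((1 - q i ^ 2) * r)) -
            ε / ((1 - q i ^ 2) * r))) ≤ δ / 2) :
    ((Finset.univ.filter (fun ω : Fin T → Equiv.Perm (Fin N) =>
          ∃ i : Fin N,
            ε ≤ |(1 / (T : ℝ)) * (∑ t, margContrib ν i (ω t)) - shapleyPerm ν i|)).card : ℝ) /
        (Fintype.card (Fin T → Equiv.Perm (Fin N)) : ℝ) ≤ δ :=
  mc_bennett_bound_general N K T hK1 ν hloc r ε δ hr hε hrange q hq hT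
end
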